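/- Let 0 ≤ θ < π/2, let A and B be n×n complex matrices in the sector class S_θ, let 0 < m ≤ M with mI ≤ ℜA ≤ MI and mI ≤ ℜB ≤ MI, let v ∈ [0,1], and let Φ be a positive unital linear map on M_n(ℂ). Then ℜ(Φ(A∇_vB)) ≤ K · ℜ(Φ(A!_vB)) in the Loewner order, where K = (M+m)²/(4mM). (This is the case p = 1, σ = !_v of the paper's Theorem comparing the arithmetic mean with any mean between !_v and ∇_v, in which no sec θ factor appears.) -/

import Mathlib

open Matrix
open scoped ComplexOrder

/-- The real part `(A + Aᴴ)/2` of a complex matrix. -/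
noncomputable def matRe {n : ℕ} (A : Matrix (Fin n) (Fin n) ℂ) : Matrix (Fin n) (Fin n) ℂ :=
  (2⁻¹ : ℂ) • (A + Aᴴ)

/-- The imaginary part `(A - Aᴴ)/(2i)` of a complex matrix. -/
noncomputable def matIm {n : ℕ} (A : Matrix (Fin n) (Fin n) ℂ) : Matrix (Fin n) (Fin n) ℂ :=
  (2 * Complex.I)⁻¹ • (A - Aᴴ)

/-- Loewner order: `Y - X` is positive semidefinite. -/
def loewnerLE {n : ℕ} (X Y : Matrix (Fin n) (Fin n) ℂ) : Prop := (Y - X).PosSemidef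

/-- `A` lies in the sector class `S_θ`: its real part is positive definite and for all `x`,
`|⟨(ℑA)x, x⟩| ≤ tan θ · ⟨(ℜA)x, x⟩`. -/
def sectorClass {n : ℕ} (θ : ℝ) (A : Matrix (Fin n) (Fin n) ℂ) : Prop :=
  (matRe A).PosDef ∧
    ∀ x : Fin n → ℂ,
      |(star x ⬝ᵥ (matIm A).mulVec x).re| ≤ Real.tan θ * (star x ⬝ᵥ (matRe A).mulVec x).re

/-- The `v`-weighted arithmetic mean `A ∇_v B = v A + (1 - v) B`. -/
noncomputable def amean {n : ℕ} (v : ℝ) (A B : Matrix (Fin n) (Fin n) ℂ) :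
    Matrix (Fin n) (Fin n) ℂ :=
  (v : ℂ) • A + ((1 - v : ℝ) : ℂ) • B

/-- The `v`-weighted harmonic mean `A !_v B = (v A⁻¹ + (1 - v) B⁻¹)⁻¹`. -/
noncomputable def hmean {n : ℕ} (v : ℝ) (A B : Matrix (Fin n) (Fin n) ℂ) :
    Matrix (Fin n) (Fin n) ℂ :=
  ((v : ℂ) • A⁻¹ + ((1 - v : ℝ) : ℂ) • B⁻¹)⁻¹

/-- A linear map on matrices is positive and unital. -/
def IsPosUnitalMap {n : ℕ}
    (Φ : Matrix (Fin n) (Fin n) ℂ →ₗ[ℂ] Matrix (Fin n) (Fin n) ℂ) : Prop :=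
  Φ 1 = 1 ∧ ∀ X : Matrix (Fin n) (Fin n) ℂ, X.PosSemidef → (Φ X).PosSemidef

/-- The numerical radius `ω(A) = sup { |⟨Ax, x⟩| : ‖x‖ = 1 }` (ℓ² norm). -/
noncomputable def numRadius {n : ℕ} (A : Matrix (Fin n) (Fin n) ℂ) : ℝ :=
  sSup {r : ℝ | ∃ x : EuclideanSpace ℂ (Fin n), ‖x‖ = 1 ∧
    r = ‖star (x : Fin n → ℂ) ⬝ᵥ A.mulVec (x : Fin n → ℂ)‖}

/-- The spectral norm (ℓ² → ℓ² operator norm) of a matrix. -/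
noncomputable def matSpectralNorm {n : ℕ} (A : Matrix (Fin n) (Fin n) ℂ) : ℝ :=
  ‖Matrix.toEuclideanCLM (𝕜 := ℂ) A‖

/-!
Write `K = (M + m)² / (4mM)`. For `m ≤ P ≤ M` the functional calculus gives
`P + mM P⁻¹ ≤ m + M`, and for every positive `H` it gives `m + M ≤ K H + mM H⁻¹`. Averaging
the first over `P = ℜA, ℜB` and taking `H = ℜA !_v ℜB` in the second yields
`ℜA ∇_v ℜB ≤ K (ℜA !_v ℜB)`. The harmonic mean is minimal among the weighted quadratic
expressions `v Y* P Y + (1 - v) Z* Q Z` with `vY + (1 - v)Z = 1`, and `ℜ(C⁻¹) = C⁻* (ℜC) C⁻¹`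
writes `ℜ(A !_v B)` as such an expression for `P = ℜA`, `Q = ℜB`; hence
`ℜA !_v ℜB ≤ ℜ(A !_v B)`. Finally a positive linear map is monotone and commutes with `ℜ`.
-/
open scoped MatrixOrder ComplexStarModule

section LoewnerOrder

variable {𝕜 ι : Type*} [RCLike 𝕜]

lemma Matrix.posDef_smul_add_smul {P Q : Matrix ι ι 𝕜} (hP : P.PosDef) (hQ : Q.PosDef) {v : ℝ}
    (h0 : 0 ≤ v) (h1 : v ≤ 1) : (v • P + (1 - v) • Q).PosDef := by
  rcases h0.eq_or_lt with rfl | hv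
  · simpa using hQ
  · exact (hP.smul hv).add_posSemidef (hQ.posSemidef.smul (sub_nonneg.2 h1))

lemma Matrix.posDef_of_smul_one_le [DecidableEq ι] {P : Matrix ι ι 𝕜} {m : ℝ} (hm : 0 < m)
    (hmP : m • 1 ≤ P) : P.PosDef := by
  simpa using PosDef.posSemidef_add hmP (PosDef.one.smul hm)

variable [Fintype ι]

lemma Matrix.conjTranspose_sub_mul_mul_sub {P H Y Y₀ : Matrix ι ι 𝕜} (hPY₀ : P * Y₀ = H)
    (hY₀P : Y₀ᴴ * P = H) :
    (Y - Y₀)ᴴ * P * (Y - Y₀) = Yᴴ * P * Y - Yᴴ * H - H * Y + H * Y₀ := by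
  simp only [conjTranspose_sub, sub_mul, mul_sub, mul_assoc, hPY₀, ← hY₀P]
  abel

variable [DecidableEq ι]

lemma Matrix.harmonic_le_smul_conj_add_smul_conj {P Q : Matrix ι ι 𝕜} (hP : P.PosDef)
    (hQ : Q.PosDef) {v : ℝ} (h0 : 0 ≤ v) (h1 : v ≤ 1) {Y Z : Matrix ι ι 𝕜}
    (hYZ : v • Y + (1 - v) • Z = 1) :
    (v • P⁻¹ + (1 - v) • Q⁻¹)⁻¹ ≤ v • (Yᴴ * P * Y) + (1 - v) • (Zᴴ * Q * Z) := by
  set G := v • P⁻¹ + (1 - v) • Q⁻¹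
  have hG : G.PosDef := posDef_smul_add_smul hP.inv hQ.inv h0 h1
  set H := G⁻¹
  have hH : Hᴴ = H := hG.inv.1
  have hGH : v • (P⁻¹ * H) + (1 - v) • (Q⁻¹ * H) = 1 := by
    rw [← smul_mul_assoc, ← smul_mul_assoc, ← add_mul,
      mul_nonsing_inv _ ((isUnit_iff_isUnit_det G).1 hG.isUnit)]
  have hR : ∀ R : Matrix ι ι 𝕜, R.PosDef → R * (R⁻¹ * H) = H ∧ (R⁻¹ * H)ᴴ * R = H := by
    intro R hR
    have hRu := (isUnit_iff_isUnit_det R).1 hR.isUnit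
    refine ⟨mul_nonsing_inv_cancel_left _ _ hRu, ?_⟩
    rw [conjTranspose_mul, hH, hR.inv.1.eq, mul_assoc, nonsing_inv_mul _ hRu, mul_one]
  -- The minimum is attained at `(P⁻¹ H, Q⁻¹ H)`; the excess over `H` is a weighted sum of squares.
  have hrem : 0 ≤ v • ((Y - P⁻¹ * H)ᴴ * P * (Y - P⁻¹ * H))
      + (1 - v) • ((Z - Q⁻¹ * H)ᴴ * Q * (Z - Q⁻¹ * H)) :=
    add_nonneg (smul_nonneg h0 (hP.posSemidef.conjTranspose_mul_mul_same _).nonneg)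
      (smul_nonneg (sub_nonneg.2 h1) (hQ.posSemidef.conjTranspose_mul_mul_same _).nonneg)
  rw [conjTranspose_sub_mul_mul_sub (hR P hP).1 (hR P hP).2,
    conjTranspose_sub_mul_mul_sub (hR Q hQ).1 (hR Q hQ).2] at hrem
  have hYZ' : v • Yᴴ + (1 - v) • Zᴴ = 1 := by
    simpa [conjTranspose_add, conjTranspose_smul] using congrArg conjTranspose hYZ
  have e1 := congrArg (· * H) hYZ'
  have e2 := congrArg (H * ·) hYZ
  have e3 := congrArg (H * ·) hGH
  simp only [add_mul, mul_add, smul_mul_assoc, mul_smul_comm, one_mul, mul_one] at e1 e2 e3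
  rw [← sub_nonneg]
  convert hrem using 1
  linear_combination (norm := module) e1 + e2 - e3

lemma Matrix.add_smul_inv_le_smul_one {P : Matrix ι ι 𝕜} {m M : ℝ} (hm : 0 < m)
    (hmP : m • 1 ≤ P) (hPM : P ≤ M • 1) :
    P + (m * M) • P⁻¹ ≤ (m + M) • 1 := by
  have hP := posDef_of_smul_one_le hm hmP
  rw [← Algebra.algebraMap_eq_smul_one, algebraMap_le_iff_le_spectrum hP.1] at hmP
  rw [← Algebra.algebraMap_eq_smul_one, le_algebraMap_iff_spectrum_le hP.1] at hPM
  have hspec : ∀ t ∈ spectrum ℝ P, t ≠ 0 := fun t ht => (hm.trans_le (hmP t ht)).ne'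
  have hcfc : cfc (fun t : ℝ => t + m * M * t⁻¹) P = P + (m * M) • P⁻¹ := by
    rw [cfc_add .., cfc_const_mul .., cfc_id' .., cfc_ringInverse_id (ha_unit := hP.isUnit),
      nonsing_inv_eq_ringInverse]
  rw [← hcfc, ← Algebra.algebraMap_eq_smul_one]
  refine (cfc_le_algebraMap_iff _ _ _).2 fun t ht => ?_
  have hmt := sub_nonneg.2 (hmP t ht)
  have htM := sub_nonneg.2 (hPM t ht)
  have ht : 0 < t := hm.trans_le (hmP t ht)
  have : m + M - (t + m * M * t⁻¹) = (t - m) * (M - t) / t := by field_simp; ring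
  have : 0 ≤ (t - m) * (M - t) / t := by positivity
  linarith

lemma Matrix.smul_one_le_smul_add_smul_inv {H : Matrix ι ι 𝕜} (hH : H.PosDef) {m M : ℝ}
    (hm : 0 < m) (hM : 0 < M) :
    (m + M) • 1 ≤ ((M + m) ^ 2 / (4 * m * M)) • H + (m * M) • H⁻¹ := by
  have hspec : ∀ t ∈ spectrum ℝ H, 0 < t :=
    (StarOrderedRing.isStrictlyPositive_iff_spectrum_pos H).1 hH.isStrictlyPositive
  have hspec' : ∀ t ∈ spectrum ℝ H, t ≠ 0 := fun t ht => (hspec t ht).ne'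
  have hcfc : cfc (fun t : ℝ => (M + m) ^ 2 / (4 * m * M) * t + m * M * t⁻¹) H
      = ((M + m) ^ 2 / (4 * m * M)) • H + (m * M) • H⁻¹ := by
    rw [cfc_add .., cfc_const_mul .., cfc_const_mul .., cfc_id' ..,
      cfc_ringInverse_id (ha_unit := hH.isUnit), nonsing_inv_eq_ringInverse]
  rw [← hcfc, ← Algebra.algebraMap_eq_smul_one]
  refine (algebraMap_le_cfc_iff _ _ _).2 fun t ht => ?_
  have ht := hspec t ht
  have : (M + m) ^ 2 / (4 * m * M) * t + m * M * t⁻¹ - (m + M)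
      = ((M + m) * t - 2 * m * M) ^ 2 / (4 * m * M * t) := by field_simp; ring
  have : 0 ≤ ((M + m) * t - 2 * m * M) ^ 2 / (4 * m * M * t) := by positivity
  linarith

lemma Matrix.smul_add_smul_le_smul_harmonic {P Q : Matrix ι ι 𝕜} {m M v : ℝ} (hm : 0 < m)
    (hmM : m ≤ M) (hmP : m • 1 ≤ P) (hPM : P ≤ M • 1) (hmQ : m • 1 ≤ Q) (hQM : Q ≤ M • 1)
    (h0 : 0 ≤ v) (h1 : v ≤ 1) :
    v • P + (1 - v) • Q ≤ ((M + m) ^ 2 / (4 * m * M)) • (v • P⁻¹ + (1 - v) • Q⁻¹)⁻¹ := by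
  set G := v • P⁻¹ + (1 - v) • Q⁻¹
  have hG : G.PosDef := posDef_smul_add_smul (posDef_of_smul_one_le hm hmP).inv
    (posDef_of_smul_one_le hm hmQ).inv h0 h1
  have hGinv : G⁻¹⁻¹ = G := nonsing_inv_nonsing_inv _ ((isUnit_iff_isUnit_det G).1 hG.isUnit)
  have hupper : v • P + (1 - v) • Q + (m * M) • G ≤ (m + M) • 1 := calc
    v • P + (1 - v) • Q + (m * M) • G
        = v • (P + (m * M) • P⁻¹) + (1 - v) • (Q + (m * M) • Q⁻¹) := by module
    _ ≤ v • ((m + M) • 1) + (1 - v) • ((m + M) • 1) :=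
      add_le_add (smul_le_smul_of_nonneg_left (add_smul_inv_le_smul_one hm hmP hPM) h0)
        (smul_le_smul_of_nonneg_left (add_smul_inv_le_smul_one hm hmQ hQM) (sub_nonneg.2 h1))
    _ = (m + M) • 1 := by module
  have hlower := smul_one_le_smul_add_smul_inv hG.inv hm (hm.trans_le hmM)
  rw [hGinv] at hlower
  exact le_of_add_le_add_right (hupper.trans hlower)

end LoewnerOrder

section RealPart

variable {n : ℕ}

lemma matRe_add (A B : Matrix (Fin n) (Fin n) ℂ) : matRe (A + B) = matRe A + matRe B := by
  simp only [matRe, conjTranspose_add, ← smul_add]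
  abel_nf

lemma matRe_smul (r : ℝ) (A : Matrix (Fin n) (Fin n) ℂ) : matRe (r • A) = r • matRe A := by
  simp only [matRe, conjTranspose_smul, star_trivial, ← smul_add, smul_comm r]

lemma matRe_amean (v : ℝ) (A B : Matrix (Fin n) (Fin n) ℂ) :
    matRe (amean v A B) = v • matRe A + (1 - v) • matRe B := by
  simp only [amean, Complex.coe_smul, matRe_add, matRe_smul]

lemma matRe_inv {C : Matrix (Fin n) (Fin n) ℂ} (hC : IsUnit C) :
    matRe C⁻¹ = (C⁻¹)ᴴ * matRe C * C⁻¹ := by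
  have hCd := (isUnit_iff_isUnit_det C).1 hC
  have h : (C⁻¹)ᴴ * Cᴴ = 1 := by
    rw [← conjTranspose_mul, mul_nonsing_inv _ hCd, conjTranspose_one]
  simp only [matRe, mul_smul_comm, smul_mul_assoc, mul_add, add_mul, h, one_mul,
    mul_nonsing_inv_cancel_right _ _ hCd, add_comm]

lemma isUnit_of_posDef_matRe {A : Matrix (Fin n) (Fin n) ℂ} (h : (matRe A).PosDef) :
    IsUnit A := by
  rw [isUnit_iff_isUnit_det, isUnit_iff_ne_zero]
  intro hdet
  obtain ⟨x, hx, hAx⟩ := exists_mulVec_eq_zero_iff.2 hdet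
  have := h.dotProduct_mulVec_pos hx
  simp only [matRe, smul_mulVec, add_mulVec, hAx, zero_add, dotProduct_smul] at this
  rw [dotProduct_mulVec, ← star_mulVec, hAx] at this
  simp at this

lemma harmonic_matRe_le_matRe_hmean {A B : Matrix (Fin n) (Fin n) ℂ} (hA : (matRe A).PosDef)
    (hB : (matRe B).PosDef) {v : ℝ} (h0 : 0 ≤ v) (h1 : v ≤ 1) :
    (v • (matRe A)⁻¹ + (1 - v) • (matRe B)⁻¹)⁻¹ ≤ matRe (hmean v A B) := by
  have hAu := isUnit_of_posDef_matRe hA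
  have hBu := isUnit_of_posDef_matRe hB
  set C := v • A⁻¹ + (1 - v) • B⁻¹
  have hReC : matRe C = v • ((A⁻¹)ᴴ * matRe A * A⁻¹) + (1 - v) • ((B⁻¹)ᴴ * matRe B * B⁻¹) := by
    rw [matRe_add, matRe_smul, matRe_smul, matRe_inv hAu, matRe_inv hBu]
  have hconj : ∀ {X : Matrix (Fin n) (Fin n) ℂ}, IsUnit X → (matRe X).PosDef →
      ((X⁻¹)ᴴ * matRe X * X⁻¹).PosDef := fun hX hReX => by
    rwa [← star_eq_conjTranspose,
      IsUnit.posDef_star_left_conjugate_iff (isUnit_nonsing_inv_iff.2 hX)]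
  have hCu : IsUnit C :=
    isUnit_of_posDef_matRe (hReC ▸ posDef_smul_add_smul (hconj hAu hA) (hconj hBu hB) h0 h1)
  have hmean_eq : hmean v A B = C⁻¹ := by simp only [hmean, Complex.coe_smul, C]
  have hCC : v • (A⁻¹ * C⁻¹) + (1 - v) • (B⁻¹ * C⁻¹) = 1 := by
    rw [← smul_mul_assoc, ← smul_mul_assoc, ← add_mul,
      mul_nonsing_inv _ ((isUnit_iff_isUnit_det C).1 hCu)]
  convert harmonic_le_smul_conj_add_smul_conj hA hB h0 h1 hCC using 1
  rw [hmean_eq, matRe_inv hCu, hReC]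
  simp only [conjTranspose_mul, mul_add, add_mul, mul_smul_comm, smul_mul_assoc, mul_assoc]

end RealPart

section PositiveMap

variable {ι κ : Type*} {Φ : Matrix ι ι ℂ →ₗ[ℂ] Matrix κ κ ℂ}

lemma map_mono_of_map_posSemidef (hΦ : ∀ X, X.PosSemidef → (Φ X).PosSemidef)
    {X Y : Matrix ι ι ℂ} (h : X ≤ Y) : Φ X ≤ Φ Y := by
  simpa only [le_iff, map_sub] using hΦ _ h

variable [Fintype ι] [DecidableEq ι]

lemma isHermitian_map_of_map_posSemidef (hΦ : ∀ X, X.PosSemidef → (Φ X).PosSemidef)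
    {X : Matrix ι ι ℂ} (hX : X.IsHermitian) : (Φ X).IsHermitian := by
  obtain ⟨P, Q, hP, hQ, rfl⟩ := IsSelfAdjoint.exists_nonneg_sub_nonneg (R := Matrix ι ι ℂ) hX
  rw [map_sub]
  exact (hΦ P hP.posSemidef).1.sub (hΦ Q hQ.posSemidef).1

lemma map_conjTranspose_of_map_posSemidef (hΦ : ∀ X, X.PosSemidef → (Φ X).PosSemidef)
    (X : Matrix ι ι ℂ) : Φ Xᴴ = (Φ X)ᴴ := by
  have hR := isHermitian_map_of_map_posSemidef hΦ (ℜ X).2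
  have hI := isHermitian_map_of_map_posSemidef hΦ (ℑ X).2
  have hR' : (ℜ X : Matrix ι ι ℂ)ᴴ = ℜ X := (ℜ X).2
  have hI' : (ℑ X : Matrix ι ι ℂ)ᴴ = ℑ X := (ℑ X).2
  rw [← realPart_add_I_smul_imaginaryPart X]
  simp only [conjTranspose_add, conjTranspose_smul, map_add, map_smul, hR.eq, hI.eq, hR', hI',
    Complex.star_def, Complex.conj_I]

end PositiveMap

lemma matRe_map_of_map_posSemidef {n : ℕ}
    {Φ : Matrix (Fin n) (Fin n) ℂ →ₗ[ℂ] Matrix (Fin n) (Fin n) ℂ}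
    (hΦ : ∀ X, X.PosSemidef → (Φ X).PosSemidef) (X : Matrix (Fin n) (Fin n) ℂ) :
    matRe (Φ X) = Φ (matRe X) := by
  rw [matRe, matRe, ← map_conjTranspose_of_map_posSemidef hΦ, ← map_add, map_smul]

theorem stmt4_general {n : ℕ}
    (A B : Matrix (Fin n) (Fin n) ℂ)
    (m M : ℝ) (hm : 0 < m) (hmM : m ≤ M)
    (hmA : loewnerLE (m • (1 : Matrix (Fin n) (Fin n) ℂ)) (matRe A))
    (hAM : loewnerLE (matRe A) (M • (1 : Matrix (Fin n) (Fin n) ℂ)))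
    (hmB : loewnerLE (m • (1 : Matrix (Fin n) (Fin n) ℂ)) (matRe B))
    (hBM : loewnerLE (matRe B) (M • (1 : Matrix (Fin n) (Fin n) ℂ)))
    (v : ℝ) (hv0 : 0 ≤ v) (hv1 : v ≤ 1)
    (Φ : Matrix (Fin n) (Fin n) ℂ →ₗ[ℂ] Matrix (Fin n) (Fin n) ℂ)
    (hΦ : IsPosUnitalMap Φ) :
    loewnerLE (matRe (Φ (amean v A B)))
      (((M + m) ^ 2 / (4 * m * M)) • matRe (Φ (hmean v A B))) := by
  have hpos := hΦ.2
  have hA := posDef_of_smul_one_le hm hmA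
  have hB := posDef_of_smul_one_le hm hmB
  have hM : 0 < M := hm.trans_le hmM
  calc matRe (Φ (amean v A B))
      = Φ (v • matRe A + (1 - v) • matRe B) := by
        rw [matRe_map_of_map_posSemidef hpos, matRe_amean]
    _ ≤ Φ (((M + m) ^ 2 / (4 * m * M)) • (v • (matRe A)⁻¹ + (1 - v) • (matRe B)⁻¹)⁻¹) :=
        map_mono_of_map_posSemidef hpos
          (smul_add_smul_le_smul_harmonic hm hmM hmA hAM hmB hBM hv0 hv1)
    _ ≤ Φ (((M + m) ^ 2 / (4 * m * M)) • matRe (hmean v A B)) := by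
        refine map_mono_of_map_posSemidef hpos (smul_le_smul_of_nonneg_left ?_ (by positivity))
        exact harmonic_matRe_le_matRe_hmean hA hB hv0 hv1
    _ = ((M + m) ^ 2 / (4 * m * M)) • matRe (Φ (hmean v A B)) := by
        rw [LinearMap.map_smul_of_tower, matRe_map_of_map_posSemidef hpos]

theorem stmt4 {n : ℕ} (θ : ℝ) (hθ0 : 0 ≤ θ) (hθ1 : θ < Real.pi / 2)
    (A B : Matrix (Fin n) (Fin n) ℂ)
    (hA : sectorClass θ A) (hB : sectorClass θ B)
    (m M : ℝ) (hm : 0 < m) (hmM : m ≤ M)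
    (hmA : loewnerLE (m • (1 : Matrix (Fin n) (Fin n) ℂ)) (matRe A))
    (hAM : loewnerLE (matRe A) (M • (1 : Matrix (Fin n) (Fin n) ℂ)))
    (hmB : loewnerLE (m • (1 : Matrix (Fin n) (Fin n) ℂ)) (matRe B))
    (hBM : loewnerLE (matRe B) (M • (1 : Matrix (Fin n) (Fin n) ℂ)))
    (v : ℝ) (hv0 : 0 ≤ v) (hv1 : v ≤ 1)
    (Φ : Matrix (Fin n) (Fin n) ℂ →ₗ[ℂ] Matrix (Fin n) (Fin n) ℂ)
    (hΦ : IsPosUnitalMap Φ) :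
    loewnerLE (matRe (Φ (amean v A B)))
      (((M + m) ^ 2 / (4 * m * M)) • matRe (Φ (hmean v A B))) :=
  stmt4_general A B m M hm hmM hmA hAM hmB hBM v hv0 hv1 Φ hΦ
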